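/- Let Ψ be a root datum with finite automorphism group Γ stabilizing a base. For β ∈ Φ, define Ξ_β = Γ·β if the orbit Γ·β is pairwise orthogonal; otherwise Ξ_β = {θ + θ′ : θ ∈ Γ·β}, where θ′ is the unique root in Γ·β distinct from and not orthogonal to θ. For α = i*(β) ∈ Φ̄, set α^∨ = (|Γ·β|/|Ξ_β|) Σ_{ξ∈Ξ_β} ξ^∨ ∈ X̄_* := X_*^Γ. Then ⟨ι(α), i_*(α^∨)⟩ = 2, where ι : X̄* ⊗ Q → (X* ⊗ Q)^Γ is the averaging section and i_* : X_*^Γ → X_* the inclusion. -/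

import Mathlib

open scoped BigOperators Classical

instance AddAut.groupOfOldMathlib (M : Type*) [Add M] : Group (AddAut M) where
  mul g h := AddEquiv.trans h g
  one := AddEquiv.refl _
  inv := AddEquiv.symm
  mul_assoc _ _ _ := rfl
  one_mul _ := rfl
  mul_one _ := rfl
  inv_mul_cancel := AddEquiv.self_trans_symm

/-- A (not necessarily reduced) root datum `Ψ = (X*, Φ, X_*, Φ^∨)`:
dual lattices `X`, `Y` in perfect duality, a finite set of roots, and a
coroot map satisfying the usual axioms. -/
structure ZRootDatum (X Y : Type) [AddCommGroup X] [AddCommGroup Y] : Type where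
  pair : X →+ Y →+ ℤ
  perfect : Function.Bijective fun x : X => pair x
  perfect' : Function.Bijective fun y : Y => pair.flip y
  roots : Finset X
  coroot : X → Y
  pair_self : ∀ β ∈ roots, pair β (coroot β) = 2
  reflect_mem : ∀ β ∈ roots, ∀ x ∈ roots, x - pair x (coroot β) • β ∈ roots
  coreflect_mem : ∀ β ∈ roots, ∀ β' ∈ roots,
    ∃ β'' ∈ roots, coroot β' - pair β (coroot β') • coroot β = coroot β''

variable {X Y Γ : Type} [AddCommGroup X] [AddCommGroup Y] [Group Γ]

/-- The Weyl group of a root datum: the subgroup of `Aut(X)` generated by the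
reflections `w_β : x ↦ x - ⟨x, β^∨⟩β` through the roots. -/
def ZRootDatum.weylGroup (Ψ : ZRootDatum X Y) : Subgroup (AddAut X) :=
  Subgroup.closure {w : AddAut X | ∃ β ∈ Ψ.roots, ∀ x, w x = x - Ψ.pair x (Ψ.coroot β) • β}

/-- `Δ` is a base (system of simple roots) of the root datum. -/
def ZRootDatum.IsBase (Ψ : ZRootDatum X Y) (Δ : Finset X) : Prop :=
  (↑Δ : Set X) ⊆ ↑Ψ.roots ∧
  LinearIndependent ℤ (fun a : ↥(↑Δ : Set X) => (a : X)) ∧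
  ∀ β ∈ Ψ.roots, ∃ c : X → ℤ,
    β = ∑ a ∈ Δ, c a • a ∧ ((∀ a ∈ Δ, 0 ≤ c a) ∨ (∀ a ∈ Δ, c a ≤ 0))

/-- A group `Γ` acting (via `ρ` on `X*` and `ρ'` on `X_*`) by automorphisms of
the root datum `Ψ`. -/
structure RDAction (Ψ : ZRootDatum X Y) (ρ : Γ →* AddAut X) (ρ' : Γ →* AddAut Y) : Prop where
  pair_eq : ∀ γ x y, Ψ.pair (ρ γ x) (ρ' γ y) = Ψ.pair x y
  root_mem : ∀ γ, ∀ β ∈ Ψ.roots, ρ γ β ∈ Ψ.roots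
  coroot_eq : ∀ γ, ∀ β ∈ Ψ.roots, Ψ.coroot (ρ γ β) = ρ' γ (Ψ.coroot β)

/-- The norm map `N : x ↦ ∑_{γ ∈ Γ} γ·x`.  For a free lattice `X`, its kernel
is exactly the kernel of the projection of `X` onto the coinvariants `X_Γ`
modulo torsion. -/
noncomputable def normMap [Fintype Γ] (ρ : Γ →* AddAut X) : X →+ X :=
  ∑ γ : Γ, ((ρ γ : X ≃+ X) : X →+ X)

/-- The projection `i* : X* → X̄*` onto the coinvariant lattice modulo torsion. -/
noncomputable def istar [Fintype Γ] (ρ : Γ →* AddAut X) : X →+ X ⧸ (normMap ρ).ker :=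
  QuotientAddGroup.mk' (normMap ρ).ker

/-- The `Γ`-orbit of `β`. -/
noncomputable def orb [Fintype Γ] (ρ : Γ →* AddAut X) (β : X) : Finset X :=
  Finset.image (fun γ : Γ => ρ γ β) Finset.univ

/-- A set of roots is (pairwise) orthogonal if distinct members pair to `0`
with each other's coroots. -/
def IsOrthogonalSet (Ψ : ZRootDatum X Y) (S : Finset X) : Prop :=
  ∀ θ ∈ S, ∀ θ' ∈ S, θ ≠ θ' → Ψ.pair θ (Ψ.coroot θ') = 0

/-- The (unique, when it exists) root in the orbit of `β` distinct from and not
orthogonal to `θ`. -/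
noncomputable def partner [Fintype Γ] (Ψ : ZRootDatum X Y) (ρ : Γ →* AddAut X) (β θ : X) : X :=
  if h : ∃ θ', θ' ∈ orb ρ β ∧ θ' ≠ θ ∧ Ψ.pair θ (Ψ.coroot θ') ≠ 0 then h.choose else 0

/-- The orthogonal `Γ`-orbit `Ξ_β` attached to `β`:  `Γ·β` itself if that orbit
is orthogonal, and `{θ + θ' : θ ∈ Γ·β}` otherwise. -/
noncomputable def Xi [Fintype Γ] (Ψ : ZRootDatum X Y) (ρ : Γ →* AddAut X) (β : X) : Finset X :=
  if IsOrthogonalSet Ψ (orb ρ β) then orb ρ β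
  else (orb ρ β).image fun θ => θ + partner Ψ ρ β θ

/-- The restricted coroot `α^∨ = (|Γ·β|/|Ξ_β|) ∑_{ξ ∈ Ξ_β} ξ^∨` attached to
`α = i*(β)`. -/
noncomputable def restCoroot [Fintype Γ] (Ψ : ZRootDatum X Y) (ρ : Γ →* AddAut X) (β : X) : Y :=
  (((orb ρ β).card / (Xi Ψ ρ β).card : ℕ) : ℤ) • ∑ ξ ∈ Xi Ψ ρ β, Ψ.coroot ξ

/-!
Averaging over `Γ` a functional that is `1` on the `Γ`-stable base gives a `Γ`-invariant height,
constant on `Γ·β` and nonzero on every root. Together with the invariant form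
`(x, y) ↦ ∑_{v ∈ Φ^∨} ⟨x, v⟩ ⟨y, v⟩`, for which all roots of `Γ·β` have the same length, this
forces distinct roots of the orbit to pair to `0` or `-1`. If a root of the orbit were joined
(pairing `-1`) to two others, then by transitivity every root of the orbit would be; contracting
joined pairs `θ, θ'` to the root `θ + θ'` would then lead to three mutually joined roots of one
length, and so to a root string `ξ - 2n d` with infinitely many members.

So, when `Γ·β` is not orthogonal, it splits into pairs `{θ, θ'}` with `(θ + θ')^∨ = θ^∨ + θ'^∨`,
whence `∑_{ξ ∈ Ξ_β} ξ^∨ = ∑_{θ ∈ Γ·β} θ^∨` and `|Γ·β| = 2 |Ξ_β|`. In both cases `α^∨` is thus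
`1` or `2` times the `Γ`-invariant coroot `∑_{θ ∈ Γ·β} θ^∨`, which pairs with `β` to `2` or `1`.
-/

open Finset

namespace ZRootDatum

theorem zsmul_left_injective (Ψ : ZRootDatum X Y) {d : X} (hd : d ≠ 0) :
    Function.Injective fun n : ℤ => n • d := by
  obtain ⟨y, hy⟩ : ∃ y, Ψ.pair d y ≠ 0 := by
    by_contra! h
    exact hd (Ψ.perfect.1 (by ext y; simp [h y]))
  intro m n hmn
  have := congrArg (fun z => Ψ.pair z y) hmn
  simp only [map_zsmul, AddMonoidHom.smul_apply, smul_eq_mul] at this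
  exact mul_right_cancel₀ hy this

variable (Ψ : ZRootDatum X Y)

noncomputable def coroots : Finset Y := Ψ.roots.image Ψ.coroot

theorem coroot_mem_coroots {b : X} (hb : b ∈ Ψ.roots) : Ψ.coroot b ∈ Ψ.coroots :=
  mem_image_of_mem _ hb

/-- Plays the role of a Weyl-invariant inner product. -/
noncomputable def rootForm : X →+ X →+ ℤ :=
  ∑ v ∈ Ψ.coroots, (AddMonoidHom.mul.comp (Ψ.pair.flip v)).compl₂ (Ψ.pair.flip v)

theorem rootForm_apply (x y : X) :
    Ψ.rootForm x y = ∑ v ∈ Ψ.coroots, Ψ.pair x v * Ψ.pair y v := by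
  simp [rootForm]

theorem rootForm_comm (x y : X) : Ψ.rootForm x y = Ψ.rootForm y x := by
  simp only [rootForm_apply, mul_comm]

theorem rootForm_sq_le (x y : X) :
    Ψ.rootForm x y ^ 2 ≤ Ψ.rootForm x x * Ψ.rootForm y y := by
  simpa only [rootForm_apply, sq] using
    sum_mul_sq_le_sq_mul_sq Ψ.coroots (fun v => Ψ.pair x v) (fun v => Ψ.pair y v)

theorem rootForm_self_pos {b : X} (hb : b ∈ Ψ.roots) : 0 < Ψ.rootForm b b := by
  rw [rootForm_apply]
  calc (0 : ℤ) < Ψ.pair b (Ψ.coroot b) * Ψ.pair b (Ψ.coroot b) := by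
        rw [Ψ.pair_self b hb]; norm_num
    _ ≤ _ := single_le_sum (f := fun v => Ψ.pair b v * Ψ.pair b v)
        (fun v _ => mul_self_nonneg _) (Ψ.coroot_mem_coroots hb)

theorem rootForm_comp_eq {S : X → X} {T : Y → Y} (hT : Set.MapsTo T Ψ.coroots Ψ.coroots)
    (hT' : Function.Injective T) (hST : ∀ x v, Ψ.pair (S x) v = Ψ.pair x (T v)) (x y : X) :
    Ψ.rootForm (S x) (S y) = Ψ.rootForm x y := by
  have himage : Ψ.coroots.image T = Ψ.coroots :=
    eq_of_subset_of_card_le (image_subset_iff.2 hT) (card_image_of_injective _ hT').ge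
  simp only [rootForm_apply, hST]
  conv_rhs => rw [← himage]
  rw [sum_image fun v _ w _ h => hT' h]

theorem rootForm_reflection {b : X} (hb : b ∈ Ψ.roots) (x y : X) :
    Ψ.rootForm (x - Ψ.pair x (Ψ.coroot b) • b) (y - Ψ.pair y (Ψ.coroot b) • b) =
      Ψ.rootForm x y := by
  set T : Y → Y := fun v => v - Ψ.pair b v • Ψ.coroot b
  have hT : ∀ v, T (T v) = v := fun v => by
    simp only [T, map_sub, map_zsmul, smul_eq_mul, Ψ.pair_self b hb]
    module
  refine Ψ.rootForm_comp_eq (S := fun x => x - Ψ.pair x (Ψ.coroot b) • b) (T := T) ?_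
    (Function.LeftInverse.injective hT) (fun x v => ?_) x y
  · intro v hv
    obtain ⟨b', hb', rfl⟩ := mem_image.1 hv
    obtain ⟨b'', hb'', he⟩ := Ψ.coreflect_mem b hb b' hb'
    simpa only [T, he, mem_coe] using Ψ.coroot_mem_coroots hb''
  · simp only [T, map_sub, map_zsmul, AddMonoidHom.sub_apply, AddMonoidHom.smul_apply,
      smul_eq_mul]
    ring

theorem two_mul_rootForm {b : X} (hb : b ∈ Ψ.roots) (x : X) :
    2 * Ψ.rootForm x b = Ψ.pair x (Ψ.coroot b) * Ψ.rootForm b b := by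
  have h := Ψ.rootForm_reflection hb x b
  rw [Ψ.pair_self b hb] at h
  simp only [map_sub, map_zsmul, AddMonoidHom.sub_apply, AddMonoidHom.smul_apply,
    smul_eq_mul] at h
  linarith

theorem pair_coroot_comm_of_rootForm_eq {ξ η : X} (hξ : ξ ∈ Ψ.roots) (hη : η ∈ Ψ.roots)
    (h : Ψ.rootForm ξ ξ = Ψ.rootForm η η) :
    Ψ.pair ξ (Ψ.coroot η) = Ψ.pair η (Ψ.coroot ξ) := by
  refine mul_right_cancel₀ (Ψ.rootForm_self_pos hη).ne' ?_
  rw [← Ψ.two_mul_rootForm hη, ← h, ← Ψ.two_mul_rootForm hξ, rootForm_comm]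

theorem abs_pair_coroot_le_two_of_rootForm_eq {ξ η : X} (hη : η ∈ Ψ.roots)
    (h : Ψ.rootForm ξ ξ = Ψ.rootForm η η) : |Ψ.pair ξ (Ψ.coroot η)| ≤ 2 := by
  have hpos := Ψ.rootForm_self_pos hη
  have hsq : Ψ.pair ξ (Ψ.coroot η) ^ 2 * Ψ.rootForm η η ^ 2 = 4 * Ψ.rootForm ξ η ^ 2 := by
    rw [← mul_pow, ← Ψ.two_mul_rootForm hη]; ring
  have hcs := Ψ.rootForm_sq_le ξ η
  rw [h] at hcs
  have : Ψ.pair ξ (Ψ.coroot η) ^ 2 ≤ 2 ^ 2 := by nlinarith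
  exact abs_le_of_sq_le_sq this (by norm_num)

theorem rootForm_add_self_of_pair_coroot_eq_neg_one {θ η : X} (hη : η ∈ Ψ.roots)
    (h₁ : Ψ.rootForm θ θ = Ψ.rootForm η η) (h : Ψ.pair θ (Ψ.coroot η) = -1) :
    Ψ.rootForm (θ + η) (θ + η) = Ψ.rootForm η η := by
  have e := Ψ.two_mul_rootForm hη θ
  simp only [map_add, AddMonoidHom.add_apply, Ψ.rootForm_comm η θ]
  linear_combination h₁ + e + Ψ.rootForm η η * h

theorem coroot_add_of_rootForm_eq {θ η : X} (hθ : θ ∈ Ψ.roots) (hη : η ∈ Ψ.roots)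
    (hθη : θ + η ∈ Ψ.roots) (h₁ : Ψ.rootForm θ θ = Ψ.rootForm η η)
    (h₂ : Ψ.rootForm (θ + η) (θ + η) = Ψ.rootForm η η) :
    Ψ.coroot (θ + η) = Ψ.coroot θ + Ψ.coroot η := by
  refine Ψ.perfect'.1 (AddMonoidHom.ext fun x => ?_)
  refine mul_right_cancel₀ (Ψ.rootForm_self_pos hη).ne' ?_
  have e₁ := Ψ.two_mul_rootForm hθη x
  have e₂ := Ψ.two_mul_rootForm hθ x
  have e₃ := Ψ.two_mul_rootForm hη x
  rw [h₂] at e₁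
  rw [h₁] at e₂
  simp only [AddMonoidHom.flip_apply, map_add, AddMonoidHom.add_apply] at e₁ ⊢
  linear_combination e₂ + e₃ - e₁

theorem add_mem_roots_of_pair_coroot_eq_neg_one {θ η : X} (hθ : θ ∈ Ψ.roots)
    (hη : η ∈ Ψ.roots) (h : Ψ.pair θ (Ψ.coroot η) = -1) : θ + η ∈ Ψ.roots := by
  simpa [h] using Ψ.reflect_mem η hη θ hθ

theorem sub_mem_roots_of_pair_coroot_eq_one {θ η : X} (hθ : θ ∈ Ψ.roots)
    (hη : η ∈ Ψ.roots) (h : Ψ.pair θ (Ψ.coroot η) = 1) : θ - η ∈ Ψ.roots := by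
  simpa [h] using Ψ.reflect_mem η hη θ hθ

theorem ne_zero_of_mem_roots {η : X} (hη : η ∈ Ψ.roots) : η ≠ 0 := by
  rintro rfl
  simpa using Ψ.pair_self 0 hη

theorem ne_of_pair_coroot_eq_neg_one {θ η : X} (hθ : θ ∈ Ψ.roots)
    (h : Ψ.pair θ (Ψ.coroot η) = -1) : θ ≠ η := by
  rintro rfl
  rw [Ψ.pair_self θ hθ] at h
  norm_num at h

/-- Otherwise `d = ξ - ε • η` pairs to `0` with `ξ^∨` and `η^∨`, and reflecting alternately in
`ξ` and `η` produces the infinitely many roots `ξ - 2n d`. -/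
theorem eq_zsmul_of_pair_coroot_eq {ξ η : X} (hξ : ξ ∈ Ψ.roots) (hη : η ∈ Ψ.roots) {ε : ℤ}
    (hε : ε * ε = 1) (h₁ : Ψ.pair ξ (Ψ.coroot η) = 2 * ε)
    (h₂ : Ψ.pair η (Ψ.coroot ξ) = 2 * ε) : ξ = ε • η := by
  by_contra hne
  set d := ξ - ε • η
  have hd : d ≠ 0 := sub_ne_zero.2 hne
  have hdξ : Ψ.pair d (Ψ.coroot ξ) = 0 := by
    simp only [d, map_sub, map_zsmul, AddMonoidHom.sub_apply, AddMonoidHom.smul_apply,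
      smul_eq_mul, Ψ.pair_self ξ hξ, h₂]
    linear_combination -2 * hε
  have hdη : Ψ.pair d (Ψ.coroot η) = 0 := by
    simp only [d, map_sub, map_zsmul, AddMonoidHom.sub_apply, AddMonoidHom.smul_apply,
      smul_eq_mul, Ψ.pair_self η hη, h₁]
    ring
  have chain : ∀ n : ℕ, ξ - (2 * n : ℤ) • d ∈ Ψ.roots := by
    intro n
    induction n with
    | zero => simpa using hξ
    | succ n ih =>
      have s₁ := Ψ.reflect_mem ξ hξ _ ih
      have e₁ : Ψ.pair (ξ - (2 * n : ℤ) • d) (Ψ.coroot ξ) = 2 := by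
        simp [Ψ.pair_self ξ hξ, hdξ]
      rw [e₁] at s₁
      have s₂ := Ψ.reflect_mem η hη _ s₁
      have e₂ : Ψ.pair (ξ - (2 * n : ℤ) • d - (2 : ℤ) • ξ) (Ψ.coroot η) = -(2 * ε) := by
        simp only [map_sub, map_zsmul, AddMonoidHom.sub_apply, AddMonoidHom.smul_apply,
          smul_eq_mul, h₁, hdη]
        ring
      rw [e₂] at s₂
      convert s₂ using 1
      simp only [d]
      push_cast
      module
  have hinj : Function.Injective fun n : ℕ => ξ - (2 * n : ℤ) • d := by
    intro m n h
    have := Ψ.zsmul_left_injective hd (sub_right_injective h)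
    omega
  exact Ψ.roots.finite_toSet.not_infinite
    (Set.infinite_of_injective_forall_mem hinj fun n => mem_coe.2 (chain n))

/-- Joining members that pair to `-1` gives a graph of minimal degree two, hence one with a
cycle, which no finite root system contains. -/
structure IsCyclicFamily (Ψ : ZRootDatum X Y) (R : Finset X) : Prop where
  subset_roots : R ⊆ Ψ.roots
  rootForm_eq : ∀ θ ∈ R, ∀ η ∈ R, Ψ.rootForm θ θ = Ψ.rootForm η η
  pair_coroot_mem : ∀ θ ∈ R, ∀ η ∈ R, θ ≠ η →
    Ψ.pair θ (Ψ.coroot η) = 0 ∨ Ψ.pair θ (Ψ.coroot η) = -1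
  exists_ne_pair_coroot_eq_neg_one : ∀ θ ∈ R, ∀ μ, ∃ η ∈ R, η ≠ μ ∧ Ψ.pair θ (Ψ.coroot η) = -1
  exists_pos : ∃ f : X →+ ℚ, ∀ θ ∈ R, 0 < f θ

variable {Ψ : ZRootDatum X Y}

namespace IsCyclicFamily

variable {R : Finset X}

theorem pair_coroot_comm (hR : Ψ.IsCyclicFamily R) {θ η : X} (hθ : θ ∈ R) (hη : η ∈ R) :
    Ψ.pair θ (Ψ.coroot η) = Ψ.pair η (Ψ.coroot θ) :=
  Ψ.pair_coroot_comm_of_rootForm_eq (hR.subset_roots hθ) (hR.subset_roots hη)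
    (hR.rootForm_eq θ hθ η hη)

theorem add_mem_roots (hR : Ψ.IsCyclicFamily R) {θ θ' : X} (hθ : θ ∈ R) (hθ' : θ' ∈ R)
    (hj : Ψ.pair θ (Ψ.coroot θ') = -1) : θ + θ' ∈ Ψ.roots :=
  Ψ.add_mem_roots_of_pair_coroot_eq_neg_one (hR.subset_roots hθ) (hR.subset_roots hθ') hj

theorem rootForm_add_self (hR : Ψ.IsCyclicFamily R) {θ θ' w : X} (hθ : θ ∈ R)
    (hθ' : θ' ∈ R) (hw : w ∈ R) (hj : Ψ.pair θ (Ψ.coroot θ') = -1) :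
    Ψ.rootForm (θ + θ') (θ + θ') = Ψ.rootForm w w := by
  rw [Ψ.rootForm_add_self_of_pair_coroot_eq_neg_one (hR.subset_roots hθ')
    (hR.rootForm_eq θ hθ θ' hθ') hj, hR.rootForm_eq θ' hθ' w hw]

/-- The sum of two joined members is a root of the same length pairing to `-2` with a member
joined to both, so it is the negative of that member, which the half-space forbids. -/
theorem not_triangle (hR : Ψ.IsCyclicFamily R) {θ₁ θ₂ θ₃ : X} (h₁ : θ₁ ∈ R) (h₂ : θ₂ ∈ R)
    (h₃ : θ₃ ∈ R) (h₁₂ : Ψ.pair θ₁ (Ψ.coroot θ₂) = -1)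
    (h₁₃ : Ψ.pair θ₁ (Ψ.coroot θ₃) = -1) (h₂₃ : Ψ.pair θ₂ (Ψ.coroot θ₃) = -1) : False := by
  have hξ := hR.add_mem_roots h₁ h₂ h₁₂
  have hnorm := hR.rootForm_add_self h₁ h₂ h₃ h₁₂
  have hpair : Ψ.pair (θ₁ + θ₂) (Ψ.coroot θ₃) = 2 * -1 := by
    rw [map_add, AddMonoidHom.add_apply, h₁₃, h₂₃]; norm_num
  have hpair' : Ψ.pair θ₃ (Ψ.coroot (θ₁ + θ₂)) = 2 * -1 := by
    rw [← Ψ.pair_coroot_comm_of_rootForm_eq hξ (hR.subset_roots h₃) hnorm, hpair]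
  have heq := Ψ.eq_zsmul_of_pair_coroot_eq hξ (hR.subset_roots h₃) (by norm_num) hpair hpair'
  obtain ⟨f, hf⟩ := hR.exists_pos
  have := congrArg f heq
  simp only [map_add, neg_smul, one_smul, map_neg] at this
  linarith [hf θ₁ h₁, hf θ₂ h₂, hf θ₃ h₃]

theorem pair_add_coroot_mem (hR : Ψ.IsCyclicFamily R) {θ θ' w : X} (hθ : θ ∈ R)
    (hθ' : θ' ∈ R) (hj : Ψ.pair θ (Ψ.coroot θ') = -1) (hw : w ∈ R) (hwθ : w ≠ θ)
    (hwθ' : w ≠ θ') :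
    Ψ.pair (θ + θ') (Ψ.coroot w) = 0 ∨ Ψ.pair (θ + θ') (Ψ.coroot w) = -1 := by
  have h₁ := hR.pair_coroot_mem θ hθ w hw hwθ.symm
  have h₂ := hR.pair_coroot_mem θ' hθ' w hw hwθ'.symm
  have h₃ : ¬(Ψ.pair θ (Ψ.coroot w) = -1 ∧ Ψ.pair θ' (Ψ.coroot w) = -1) := fun h =>
    hR.not_triangle hθ hθ' hw hj h.1 h.2
  rw [map_add, AddMonoidHom.add_apply]
  omega

theorem add_ne (hR : Ψ.IsCyclicFamily R) {θ θ' w : X} (hθ : θ ∈ R) (hθ' : θ' ∈ R)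
    (hj : Ψ.pair θ (Ψ.coroot θ') = -1) (hw : w ∈ R) (hwθ : w ≠ θ) (hwθ' : w ≠ θ') :
    θ + θ' ≠ w := by
  intro h
  have := hR.pair_add_coroot_mem hθ hθ' hj hw hwθ hwθ'
  rw [h, Ψ.pair_self w (hR.subset_roots hw)] at this
  norm_num at this

theorem pair_coroot_add_comm (hR : Ψ.IsCyclicFamily R) {θ θ' w : X} (hθ : θ ∈ R)
    (hθ' : θ' ∈ R) (hj : Ψ.pair θ (Ψ.coroot θ') = -1) (hw : w ∈ R) :
    Ψ.pair w (Ψ.coroot (θ + θ')) = Ψ.pair (θ + θ') (Ψ.coroot w) :=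
  Ψ.pair_coroot_comm_of_rootForm_eq (hR.subset_roots hw) (hR.add_mem_roots hθ hθ' hj)
    (hR.rootForm_add_self hθ hθ' hw hj).symm

theorem pair_coroot_eq_zero_of_joined (hR : Ψ.IsCyclicFamily R) {θ θ' w : X} (hθ : θ ∈ R)
    (hθ' : θ' ∈ R) (hj : Ψ.pair θ (Ψ.coroot θ') = -1) (hw : w ∈ R) (hwθ' : w ≠ θ')
    (hθw : Ψ.pair θ (Ψ.coroot w) = -1) : Ψ.pair θ' (Ψ.coroot w) = 0 :=
  (hR.pair_coroot_mem θ' hθ' w hw hwθ'.symm).resolve_right (hR.not_triangle hθ hθ' hw hj hθw)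

theorem exists_ne_pair_add_coroot_eq_neg_one (hR : Ψ.IsCyclicFamily R) {θ θ' : X}
    (hθ : θ ∈ R) (hθ' : θ' ∈ R) (hj : Ψ.pair θ (Ψ.coroot θ') = -1) (μ : X) :
    ∃ η ∈ R, η ≠ θ ∧ η ≠ θ' ∧ η ≠ μ ∧ Ψ.pair (θ + θ') (Ψ.coroot η) = -1 := by
  have hj' : Ψ.pair θ' (Ψ.coroot θ) = -1 := by rw [hR.pair_coroot_comm hθ' hθ, hj]
  obtain ⟨A, hA, hAθ', hθA⟩ := hR.exists_ne_pair_coroot_eq_neg_one θ hθ θ'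
  obtain ⟨B, hB, hBθ, hθ'B⟩ := hR.exists_ne_pair_coroot_eq_neg_one θ' hθ' θ
  have hAθ := (Ψ.ne_of_pair_coroot_eq_neg_one (hR.subset_roots hθ) hθA).symm
  have hBθ' := (Ψ.ne_of_pair_coroot_eq_neg_one (hR.subset_roots hθ') hθ'B).symm
  have hξA : Ψ.pair (θ + θ') (Ψ.coroot A) = -1 := by
    rw [map_add, AddMonoidHom.add_apply, hθA,
      hR.pair_coroot_eq_zero_of_joined hθ hθ' hj hA hAθ' hθA, add_zero]
  have hξB : Ψ.pair (θ + θ') (Ψ.coroot B) = -1 := by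
    rw [map_add, AddMonoidHom.add_apply, hθ'B,
      hR.pair_coroot_eq_zero_of_joined hθ' hθ hj' hB hBθ hθ'B, zero_add]
  have hAB : A ≠ B := by
    rintro rfl
    exact hR.not_triangle hθ hθ' hA hj hθA hθ'B
  by_cases hAμ : A = μ
  · exact ⟨B, hB, hBθ, hBθ', fun h => hAB (hAμ.trans h.symm), hξB⟩
  · exact ⟨A, hA, hAθ, hAθ', hAμ, hξA⟩

theorem pair_coroot_add_eq_neg_one (hR : Ψ.IsCyclicFamily R) {θ θ' w : X} (hθ : θ ∈ R)
    (hθ' : θ' ∈ R) (hj : Ψ.pair θ (Ψ.coroot θ') = -1) (hw : w ∈ R) (hwθ : w ≠ θ)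
    (hwθ' : w ≠ θ') (hjoin : Ψ.pair w (Ψ.coroot θ) = -1 ∨ Ψ.pair w (Ψ.coroot θ') = -1) :
    Ψ.pair w (Ψ.coroot (θ + θ')) = -1 := by
  have hmem := hR.pair_add_coroot_mem hθ hθ' hj hw hwθ hwθ'
  rw [hR.pair_coroot_add_comm hθ hθ' hj hw]
  rw [map_add, AddMonoidHom.add_apply] at hmem ⊢
  rw [hR.pair_coroot_comm hθ hw, hR.pair_coroot_comm hθ' hw] at hmem ⊢
  have h₁ := hR.pair_coroot_mem w hw θ hθ hwθ
  have h₂ := hR.pair_coroot_mem w hw θ' hθ' hwθ'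
  omega

theorem exists_ne_pair_coroot_eq_neg_one_of_contract (hR : Ψ.IsCyclicFamily R) {θ θ' w : X}
    (hθ : θ ∈ R) (hθ' : θ' ∈ R) (hj : Ψ.pair θ (Ψ.coroot θ') = -1) (hw : w ∈ R)
    (hwθ : w ≠ θ) (hwθ' : w ≠ θ') (μ : X) :
    ∃ η ∈ insert (θ + θ') (R \ {θ, θ'}), η ≠ μ ∧ Ψ.pair w (Ψ.coroot η) = -1 := by
  have mem_of_ne {η : X} (hη : η ∈ R) (hηθ : η ≠ θ) (hηθ' : η ≠ θ') :
      η ∈ insert (θ + θ') (R \ {θ, θ'}) :=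
    mem_insert_of_mem (by simp [hη, hηθ, hηθ'])
  by_cases hμ : μ = θ + θ'
  · subst hμ
    obtain ⟨μ₁, hμ₁, hμ₁θ, hwμ₁⟩ := hR.exists_ne_pair_coroot_eq_neg_one w hw θ
    by_cases hμ₁θ' : μ₁ = θ'
    · subst hμ₁θ'
      obtain ⟨μ₂, hμ₂, hμ₂θ', hwμ₂⟩ := hR.exists_ne_pair_coroot_eq_neg_one w hw μ₁
      have hμ₂θ : μ₂ ≠ θ := by
        rintro rfl
        refine hR.not_triangle hθ hθ' hw hj ?_ ?_
        · rwa [hR.pair_coroot_comm hθ hw]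
        · rwa [hR.pair_coroot_comm hθ' hw]
      exact ⟨μ₂, mem_of_ne hμ₂ hμ₂θ hμ₂θ', (hR.add_ne hθ hθ' hj hμ₂ hμ₂θ hμ₂θ').symm, hwμ₂⟩
    · exact ⟨μ₁, mem_of_ne hμ₁ hμ₁θ hμ₁θ', (hR.add_ne hθ hθ' hj hμ₁ hμ₁θ hμ₁θ').symm, hwμ₁⟩
  · obtain ⟨ν, hν, hνμ, hwν⟩ := hR.exists_ne_pair_coroot_eq_neg_one w hw μ
    by_cases hνθ : ν = θ ∨ ν = θ'
    · refine ⟨θ + θ', mem_insert_self _ _, Ne.symm hμ,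
        hR.pair_coroot_add_eq_neg_one hθ hθ' hj hw hwθ hwθ' ?_⟩
      rcases hνθ with rfl | rfl
      exacts [Or.inl hwν, Or.inr hwν]
    · obtain ⟨hνθ, hνθ'⟩ := not_or.1 hνθ
      exact ⟨ν, mem_of_ne hν hνθ hνθ', hνμ, hwν⟩

/-- No member is joined to both `θ` and `θ'` (`not_triangle`), so after contracting the pair
to `θ + θ'` every member is still joined to two others. -/
theorem contract (hR : Ψ.IsCyclicFamily R) {θ θ' : X} (hθ : θ ∈ R) (hθ' : θ' ∈ R)
    (hj : Ψ.pair θ (Ψ.coroot θ') = -1) :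
    Ψ.IsCyclicFamily (insert (θ + θ') (R \ {θ, θ'})) := by
  have hmem (w : X) : w ∈ insert (θ + θ') (R \ {θ, θ'}) ↔
      w = θ + θ' ∨ (w ∈ R ∧ w ≠ θ ∧ w ≠ θ') := by
    simp
  have hnorm (w : X) (hw : w ∈ insert (θ + θ') (R \ {θ, θ'})) :
      Ψ.rootForm w w = Ψ.rootForm θ θ := by
    rcases (hmem w).1 hw with rfl | ⟨hw, -⟩
    exacts [hR.rootForm_add_self hθ hθ' hθ hj, hR.rootForm_eq w hw θ hθ]
  refine ⟨fun w hw => ?_, fun w hw w' hw' => by rw [hnorm w hw, hnorm w' hw'],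
    fun w hw w' hw' hne => ?_, fun w hw μ => ?_, ?_⟩
  · rcases (hmem w).1 hw with rfl | ⟨hw, -⟩
    exacts [hR.add_mem_roots hθ hθ' hj, hR.subset_roots hw]
  · rcases (hmem w).1 hw with rfl | ⟨hw, hwθ, hwθ'⟩ <;>
      rcases (hmem w').1 hw' with rfl | ⟨hw', hw'θ, hw'θ'⟩
    · exact (hne rfl).elim
    · exact hR.pair_add_coroot_mem hθ hθ' hj hw' hw'θ hw'θ'
    · rw [hR.pair_coroot_add_comm hθ hθ' hj hw]
      exact hR.pair_add_coroot_mem hθ hθ' hj hw hwθ hwθ'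
    · exact hR.pair_coroot_mem w hw w' hw' hne
  · rcases (hmem w).1 hw with rfl | ⟨hw, hwθ, hwθ'⟩
    · obtain ⟨η, hη, hηθ, hηθ', hημ, hpair⟩ :=
        hR.exists_ne_pair_add_coroot_eq_neg_one hθ hθ' hj μ
      exact ⟨η, (hmem η).2 (Or.inr ⟨hη, hηθ, hηθ'⟩), hημ, hpair⟩
    · exact hR.exists_ne_pair_coroot_eq_neg_one_of_contract hθ hθ' hj hw hwθ hwθ' μ
  · obtain ⟨f, hf⟩ := hR.exists_pos
    refine ⟨f, fun w hw => ?_⟩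
    rcases (hmem w).1 hw with rfl | ⟨hw, -⟩
    · rw [map_add]; exact add_pos (hf θ hθ) (hf θ' hθ')
    · exact hf w hw

theorem card_contract_lt {θ θ' : X} (hθ : θ ∈ R) (hθ' : θ' ∈ R) (hne : θ ≠ θ') :
    (insert (θ + θ') (R \ {θ, θ'})).card < R.card := by
  have hsub : {θ, θ'} ⊆ R := insert_subset hθ (singleton_subset_iff.2 hθ')
  have := card_sdiff_of_subset hsub
  have := card_insert_le (θ + θ') (R \ {θ, θ'})
  have := card_pair hne
  have := card_le_card hsub
  omega

theorem eq_empty {R : Finset X} (hR : Ψ.IsCyclicFamily R) : R = ∅ := by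
  by_contra hne
  obtain ⟨θ, hθ⟩ := nonempty_iff_ne_empty.2 hne
  obtain ⟨θ', hθ', -, hj⟩ := hR.exists_ne_pair_coroot_eq_neg_one θ hθ θ
  exact insert_ne_empty _ _ (hR.contract hθ hθ' hj).eq_empty
termination_by R.card
decreasing_by
  exact card_contract_lt hθ hθ' (Ψ.ne_of_pair_coroot_eq_neg_one (hR.subset_roots hθ) hj)

end IsCyclicFamily

end ZRootDatum

theorem exists_addMonoidHom_eq_one_of_linearIndependent {Δ : Set X}
    (hli : LinearIndependent ℤ fun a : Δ => (a : X)) : ∃ f : X →+ ℚ, ∀ a ∈ Δ, f a = 1 := by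
  let b := Module.Basis.span hli
  obtain ⟨f, hf⟩ := (Module.Baer.of_divisible ℚ).extension_property_addMonoidHom
    (Submodule.subtype _).toAddMonoidHom Subtype.val_injective
    ((Int.castAddHom ℚ).comp b.sumCoords.toAddMonoidHom)
  refine ⟨f, fun a ha => ?_⟩
  have h := DFunLike.congr_fun hf (b ⟨a, ha⟩)
  simp only [AddMonoidHom.comp_apply, LinearMap.toAddMonoidHom_coe, b.sumCoords_self_apply] at h
  simpa [b] using h

namespace ZRootDatum

variable {Ψ : ZRootDatum X Y} {Δ : Finset X}

theorem IsBase.map_ne_zero_of_pos (hΔ : Ψ.IsBase Δ) {f : X →+ ℚ} (hf : ∀ a ∈ Δ, 0 < f a)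
    {η : X} (hη : η ∈ Ψ.roots) : f η ≠ 0 := by
  obtain ⟨c, rfl, hc⟩ := hΔ.2.2 η hη
  intro h0
  simp only [map_sum, map_zsmul, zsmul_eq_mul] at h0
  have hzero : ∀ a ∈ Δ, c a = 0 := by
    rcases hc with hc | hc
    · intro a ha
      have := (sum_eq_zero_iff_of_nonneg fun a ha =>
        mul_nonneg (Int.cast_nonneg (hc a ha)) (hf a ha).le).1 h0 a ha
      exact_mod_cast (mul_eq_zero.1 this).resolve_right (hf a ha).ne'
    · intro a ha
      have := (sum_eq_zero_iff_of_nonpos fun a ha =>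
        mul_nonpos_of_nonpos_of_nonneg (Int.cast_nonpos.2 (hc a ha)) (hf a ha).le).1 h0 a ha
      exact_mod_cast (mul_eq_zero.1 this).resolve_right (hf a ha).ne'
  exact Ψ.ne_zero_of_mem_roots hη (sum_eq_zero fun a ha => by rw [hzero a ha, zero_smul])

end ZRootDatum

/-- The average over `Γ` of a height that is `1` on the base. -/
theorem exists_invariant_addMonoidHom_pos [Fintype Γ] {Δ : Finset X} {ρ : Γ →* AddAut X}
    (hli : LinearIndependent ℤ fun a : (Δ : Set X) => (a : X))
    (hstab : ∀ γ : Γ, ∀ a ∈ Δ, ρ γ a ∈ Δ) :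
    ∃ f : X →+ ℚ, (∀ γ x, f (ρ γ x) = f x) ∧ ∀ a ∈ Δ, 0 < f a := by
  obtain ⟨f₀, hf₀⟩ := exists_addMonoidHom_eq_one_of_linearIndependent hli
  refine ⟨∑ γ : Γ, f₀.comp (ρ γ).toAddMonoidHom, fun δ x => ?_, fun a ha => ?_⟩
  · simp only [AddMonoidHom.finsetSum_apply, AddMonoidHom.comp_apply,
      AddEquiv.coe_toAddMonoidHom]
    rw [← Equiv.sum_comp (Equiv.mulRight δ) fun γ => f₀ (ρ γ x)]
    exact sum_congr rfl fun γ _ => by rw [Equiv.coe_mulRight, map_mul]; rfl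
  · simp only [AddMonoidHom.finsetSum_apply, AddMonoidHom.comp_apply,
      AddEquiv.coe_toAddMonoidHom]
    exact sum_pos (fun γ _ => by simp [hf₀ _ (mem_coe.2 (hstab γ a ha))]) univ_nonempty

theorem AddAut.map_apply_map_inv_apply {M : Type} [AddCommGroup M] (σ : Γ →* AddAut M) (γ : Γ)
    (v : M) : σ γ (σ γ⁻¹ v) = v := by
  rw [map_inv]
  exact (σ γ).apply_symm_apply v

theorem AddAut.map_inv_apply_map_apply {M : Type} [AddCommGroup M] (σ : Γ →* AddAut M) (γ : Γ)
    (v : M) : σ γ⁻¹ (σ γ v) = v := by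
  rw [map_inv]
  exact (σ γ).symm_apply_apply v

namespace RDAction

variable {Ψ : ZRootDatum X Y} {ρ : Γ →* AddAut X} {ρ' : Γ →* AddAut Y}

theorem pair_coroot_map (hact : RDAction Ψ ρ ρ') {θ : X} (hθ : θ ∈ Ψ.roots) (γ : Γ) (x : X) :
    Ψ.pair (ρ γ x) (Ψ.coroot (ρ γ θ)) = Ψ.pair x (Ψ.coroot θ) := by
  rw [hact.coroot_eq γ θ hθ, hact.pair_eq]

theorem rootForm_map (hact : RDAction Ψ ρ ρ') (γ : Γ) (x y : X) :
    Ψ.rootForm (ρ γ x) (ρ γ y) = Ψ.rootForm x y := by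
  refine Ψ.rootForm_comp_eq (T := ρ' γ⁻¹) (fun v hv => ?_) (ρ' γ⁻¹).injective
    (fun x v => ?_) x y
  · obtain ⟨b, hb, rfl⟩ := mem_image.1 hv
    rw [← hact.coroot_eq γ⁻¹ b hb]
    exact Ψ.coroot_mem_coroots (hact.root_mem γ⁻¹ b hb)
  · conv_lhs => rw [← AddAut.map_apply_map_inv_apply ρ' γ v]
    exact hact.pair_eq γ x _

end RDAction

section Orbit

variable [Fintype Γ] {Ψ : ZRootDatum X Y} {ρ : Γ →* AddAut X} {ρ' : Γ →* AddAut Y}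

theorem mem_orb {β θ : X} : θ ∈ orb ρ β ↔ ∃ γ, ρ γ β = θ := by
  simp [orb]

theorem mem_orb_self (β : X) : β ∈ orb ρ β :=
  mem_orb.2 ⟨1, by rw [map_one]; rfl⟩

theorem map_mem_orb {β θ : X} (γ : Γ) (hθ : θ ∈ orb ρ β) : ρ γ θ ∈ orb ρ β := by
  obtain ⟨δ, rfl⟩ := mem_orb.1 hθ
  exact mem_orb.2 ⟨γ * δ, by rw [map_mul]; rfl⟩

theorem exists_map_eq_of_mem_orb {β θ θ' : X} (hθ : θ ∈ orb ρ β) (hθ' : θ' ∈ orb ρ β) :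
    ∃ γ, ρ γ θ' = θ := by
  obtain ⟨γ, rfl⟩ := mem_orb.1 hθ
  obtain ⟨δ, rfl⟩ := mem_orb.1 hθ'
  refine ⟨γ * δ⁻¹, ?_⟩
  rw [map_mul]
  exact congrArg (ρ γ) (AddAut.map_inv_apply_map_apply ρ δ β)

theorem image_orb (γ : Γ) (β : X) : (orb ρ β).image (ρ γ) = orb ρ β :=
  eq_of_subset_of_card_le (image_subset_iff.2 fun _ hθ => map_mem_orb γ hθ)
    (card_image_of_injective _ (ρ γ).injective).ge

namespace RDAction

theorem orb_subset_roots (hact : RDAction Ψ ρ ρ') {β : X} (hβ : β ∈ Ψ.roots) :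
    orb ρ β ⊆ Ψ.roots := fun θ hθ => by
  obtain ⟨γ, rfl⟩ := mem_orb.1 hθ
  exact hact.root_mem γ β hβ

theorem rootForm_eq_of_mem_orb (hact : RDAction Ψ ρ ρ') {β θ θ' : X} (hθ : θ ∈ orb ρ β)
    (hθ' : θ' ∈ orb ρ β) : Ψ.rootForm θ θ = Ψ.rootForm θ' θ' := by
  obtain ⟨γ, rfl⟩ := mem_orb.1 hθ
  obtain ⟨δ, rfl⟩ := mem_orb.1 hθ'
  rw [hact.rootForm_map, hact.rootForm_map]

theorem map_sum_coroot_orb (hact : RDAction Ψ ρ ρ') {β : X} (hβ : β ∈ Ψ.roots) (γ : Γ) :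
    ρ' γ (∑ θ ∈ orb ρ β, Ψ.coroot θ) = ∑ θ ∈ orb ρ β, Ψ.coroot θ := by
  rw [map_sum, ← sum_congr rfl fun θ hθ => hact.coroot_eq γ θ (hact.orb_subset_roots hβ hθ)]
  conv_rhs => rw [← image_orb γ β]
  rw [sum_image fun _ _ _ _ h => (ρ γ).injective h]

end RDAction

variable {Δ : Finset X}

theorem exists_height_orb (hΔ : Ψ.IsBase Δ)
    (hstab : ∀ γ : Γ, ∀ a ∈ Δ, ρ γ a ∈ Δ) {β : X} (hβ : β ∈ Ψ.roots) :
    ∃ f : X →+ ℚ, (∀ θ ∈ orb ρ β, f θ = 1) ∧ ∀ η ∈ Ψ.roots, f η ≠ 0 := by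
  obtain ⟨F, hFinv, hFpos⟩ := exists_invariant_addMonoidHom_pos hΔ.2.1 hstab
  have hF := fun η (hη : η ∈ Ψ.roots) => hΔ.map_ne_zero_of_pos hFpos hη
  refine ⟨(AddMonoidHom.mulLeft (F β)⁻¹).comp F, fun θ hθ => ?_, fun η hη => ?_⟩
  · obtain ⟨γ, rfl⟩ := mem_orb.1 hθ
    simp [hFinv, inv_mul_cancel₀ (hF β hβ)]
  · simp [hF β hβ, hF η hη]

theorem add_ne_zero_of_mem_orb (hΔ : Ψ.IsBase Δ)
    (hstab : ∀ γ : Γ, ∀ a ∈ Δ, ρ γ a ∈ Δ) {β θ θ' : X} (hβ : β ∈ Ψ.roots)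
    (hθ : θ ∈ orb ρ β) (hθ' : θ' ∈ orb ρ β) : θ + θ' ≠ 0 := by
  obtain ⟨f, hf, -⟩ := exists_height_orb hΔ hstab hβ
  intro h
  have := congrArg f h
  rw [map_add, hf θ hθ, hf θ' hθ', map_zero] at this
  norm_num at this

theorem sub_notMem_roots_of_mem_orb (hΔ : Ψ.IsBase Δ)
    (hstab : ∀ γ : Γ, ∀ a ∈ Δ, ρ γ a ∈ Δ) {β θ θ' : X} (hβ : β ∈ Ψ.roots)
    (hθ : θ ∈ orb ρ β) (hθ' : θ' ∈ orb ρ β) : θ - θ' ∉ Ψ.roots := by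
  obtain ⟨f, hf, hf'⟩ := exists_height_orb hΔ hstab hβ
  intro h
  exact hf' _ h (by rw [map_sub, hf θ hθ, hf θ' hθ', sub_self])

/-- Having a common length, `θ` and `θ'` pair to at most `2` in absolute value; the values
`2`, `-2` and `1` would make `θ = θ'`, `θ + θ' = 0` or `θ - θ'` a root, against the height. -/
theorem pair_coroot_mem_of_mem_orb (hact : RDAction Ψ ρ ρ') (hΔ : Ψ.IsBase Δ)
    (hstab : ∀ γ : Γ, ∀ a ∈ Δ, ρ γ a ∈ Δ) {β θ θ' : X} (hβ : β ∈ Ψ.roots)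
    (hθ : θ ∈ orb ρ β) (hθ' : θ' ∈ orb ρ β) (hne : θ ≠ θ') :
    Ψ.pair θ (Ψ.coroot θ') = 0 ∨ Ψ.pair θ (Ψ.coroot θ') = -1 := by
  have hθr := hact.orb_subset_roots hβ hθ
  have hθ'r := hact.orb_subset_roots hβ hθ'
  have hnorm := hact.rootForm_eq_of_mem_orb hθ hθ'
  have hcomm := Ψ.pair_coroot_comm_of_rootForm_eq hθr hθ'r hnorm
  have hbound := abs_le.1 (Ψ.abs_pair_coroot_le_two_of_rootForm_eq hθ'r hnorm)
  have hne_two : Ψ.pair θ (Ψ.coroot θ') ≠ 2 := by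
    intro h
    have := Ψ.eq_zsmul_of_pair_coroot_eq hθr hθ'r (ε := 1) (by norm_num) (by rw [h]; norm_num)
      (by rw [← hcomm, h]; norm_num)
    exact hne (by simpa using this)
  have hne_neg_two : Ψ.pair θ (Ψ.coroot θ') ≠ -2 := by
    intro h
    have := Ψ.eq_zsmul_of_pair_coroot_eq hθr hθ'r (ε := -1) (by norm_num) (by rw [h]; norm_num)
      (by rw [← hcomm, h]; norm_num)
    exact add_ne_zero_of_mem_orb hΔ hstab hβ hθ hθ' (by simp [this])
  have hne_one : Ψ.pair θ (Ψ.coroot θ') ≠ 1 := fun h =>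
    sub_notMem_roots_of_mem_orb hΔ hstab hβ hθ hθ'
      (Ψ.sub_mem_roots_of_pair_coroot_eq_one hθr hθ'r h)
  omega

/-- If a root of the orbit were joined to two others, by transitivity every root of the orbit
would be, and the orbit would be a cyclic family. -/
theorem eq_of_pair_coroot_eq_neg_one_of_mem_orb (hact : RDAction Ψ ρ ρ') (hΔ : Ψ.IsBase Δ)
    (hstab : ∀ γ : Γ, ∀ a ∈ Δ, ρ γ a ∈ Δ) {β θ θ₁ θ₂ : X} (hβ : β ∈ Ψ.roots)
    (hθ : θ ∈ orb ρ β) (hθ₁ : θ₁ ∈ orb ρ β) (hθ₂ : θ₂ ∈ orb ρ β)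
    (h₁ : Ψ.pair θ (Ψ.coroot θ₁) = -1) (h₂ : Ψ.pair θ (Ψ.coroot θ₂) = -1) : θ₁ = θ₂ := by
  by_contra hne
  obtain ⟨f, hf, -⟩ := exists_height_orb hΔ hstab hβ
  have hfam : Ψ.IsCyclicFamily (orb ρ β) := by
    refine ⟨hact.orb_subset_roots hβ, fun η hη η' hη' => hact.rootForm_eq_of_mem_orb hη hη',
      fun η hη η' hη' => pair_coroot_mem_of_mem_orb hact hΔ hstab hβ hη hη',
      fun η hη μ => ?_, ⟨f, fun η hη => by rw [hf η hη]; norm_num⟩⟩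
    obtain ⟨γ, rfl⟩ := exists_map_eq_of_mem_orb hη hθ
    have hj₁ : Ψ.pair (ρ γ θ) (Ψ.coroot (ρ γ θ₁)) = -1 := by
      rw [hact.pair_coroot_map (hact.orb_subset_roots hβ hθ₁), h₁]
    have hj₂ : Ψ.pair (ρ γ θ) (Ψ.coroot (ρ γ θ₂)) = -1 := by
      rw [hact.pair_coroot_map (hact.orb_subset_roots hβ hθ₂), h₂]
    by_cases hμ : ρ γ θ₁ = μ
    · exact ⟨ρ γ θ₂, map_mem_orb γ hθ₂, fun h => hne ((ρ γ).injective (hμ.trans h.symm)), hj₂⟩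
    · exact ⟨ρ γ θ₁, map_mem_orb γ hθ₁, hμ, hj₁⟩
  exact ne_empty_of_mem (mem_orb_self β) hfam.eq_empty

theorem partner_spec (hact : RDAction Ψ ρ ρ') (hΔ : Ψ.IsBase Δ)
    (hstab : ∀ γ : Γ, ∀ a ∈ Δ, ρ γ a ∈ Δ) {β θ : X} (hβ : β ∈ Ψ.roots)
    (hno : ¬IsOrthogonalSet Ψ (orb ρ β)) (hθ : θ ∈ orb ρ β) :
    partner Ψ ρ β θ ∈ orb ρ β ∧ partner Ψ ρ β θ ≠ θ ∧
      Ψ.pair θ (Ψ.coroot (partner Ψ ρ β θ)) = -1 := by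
  have hex : ∃ θ', θ' ∈ orb ρ β ∧ θ' ≠ θ ∧ Ψ.pair θ (Ψ.coroot θ') ≠ 0 := by
    simp only [IsOrthogonalSet, not_forall] at hno
    obtain ⟨θ₀, hθ₀, θ₀', hθ₀', hne, hpair⟩ := hno
    obtain ⟨γ, rfl⟩ := exists_map_eq_of_mem_orb hθ hθ₀
    refine ⟨ρ γ θ₀', map_mem_orb γ hθ₀', fun h => hne ((ρ γ).injective h).symm, ?_⟩
    rwa [hact.pair_coroot_map (hact.orb_subset_roots hβ hθ₀')]
  rw [partner, dif_pos hex]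
  obtain ⟨h₁, h₂, h₃⟩ := hex.choose_spec
  exact ⟨h₁, h₂, (pair_coroot_mem_of_mem_orb hact hΔ hstab hβ hθ h₁ h₂.symm).resolve_left h₃⟩

theorem pair_partner_coroot (hact : RDAction Ψ ρ ρ') (hΔ : Ψ.IsBase Δ)
    (hstab : ∀ γ : Γ, ∀ a ∈ Δ, ρ γ a ∈ Δ) {β θ : X} (hβ : β ∈ Ψ.roots)
    (hno : ¬IsOrthogonalSet Ψ (orb ρ β)) (hθ : θ ∈ orb ρ β) :
    Ψ.pair (partner Ψ ρ β θ) (Ψ.coroot θ) = -1 := by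
  obtain ⟨hp, -, hpp⟩ := partner_spec hact hΔ hstab hβ hno hθ
  rw [← Ψ.pair_coroot_comm_of_rootForm_eq (hact.orb_subset_roots hβ hθ)
    (hact.orb_subset_roots hβ hp) (hact.rootForm_eq_of_mem_orb hθ hp), hpp]

theorem eq_partner (hact : RDAction Ψ ρ ρ') (hΔ : Ψ.IsBase Δ)
    (hstab : ∀ γ : Γ, ∀ a ∈ Δ, ρ γ a ∈ Δ) {β θ θ' : X} (hβ : β ∈ Ψ.roots)
    (hno : ¬IsOrthogonalSet Ψ (orb ρ β)) (hθ : θ ∈ orb ρ β) (hθ' : θ' ∈ orb ρ β)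
    (hne : θ' ≠ θ) (h : Ψ.pair θ (Ψ.coroot θ') ≠ 0) : θ' = partner Ψ ρ β θ := by
  obtain ⟨hp, -, hpp⟩ := partner_spec hact hΔ hstab hβ hno hθ
  exact eq_of_pair_coroot_eq_neg_one_of_mem_orb hact hΔ hstab hβ hθ hθ' hp
    ((pair_coroot_mem_of_mem_orb hact hΔ hstab hβ hθ hθ' hne.symm).resolve_left h) hpp

theorem partner_partner (hact : RDAction Ψ ρ ρ') (hΔ : Ψ.IsBase Δ)
    (hstab : ∀ γ : Γ, ∀ a ∈ Δ, ρ γ a ∈ Δ) {β θ : X} (hβ : β ∈ Ψ.roots)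
    (hno : ¬IsOrthogonalSet Ψ (orb ρ β)) (hθ : θ ∈ orb ρ β) :
    partner Ψ ρ β (partner Ψ ρ β θ) = θ := by
  obtain ⟨hp, hpne, -⟩ := partner_spec hact hΔ hstab hβ hno hθ
  refine (eq_partner hact hΔ hstab hβ hno hp hθ hpne.symm ?_).symm
  rw [pair_partner_coroot hact hΔ hstab hβ hno hθ]
  norm_num

theorem coroot_add_partner (hact : RDAction Ψ ρ ρ') (hΔ : Ψ.IsBase Δ)
    (hstab : ∀ γ : Γ, ∀ a ∈ Δ, ρ γ a ∈ Δ) {β θ : X} (hβ : β ∈ Ψ.roots)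
    (hno : ¬IsOrthogonalSet Ψ (orb ρ β)) (hθ : θ ∈ orb ρ β) :
    Ψ.coroot (θ + partner Ψ ρ β θ) = Ψ.coroot θ + Ψ.coroot (partner Ψ ρ β θ) := by
  obtain ⟨hp, -, hpp⟩ := partner_spec hact hΔ hstab hβ hno hθ
  have hθr := hact.orb_subset_roots hβ hθ
  have hpr := hact.orb_subset_roots hβ hp
  have hnorm := hact.rootForm_eq_of_mem_orb hθ hp
  exact Ψ.coroot_add_of_rootForm_eq hθr hpr
    (Ψ.add_mem_roots_of_pair_coroot_eq_neg_one hθr hpr hpp) hnorm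
    (Ψ.rootForm_add_self_of_pair_coroot_eq_neg_one hpr hnorm hpp)

/-- Pairing with `θ₀^∨` gives `2 - 1 = 1` on the right, but at most `0` on the left unless `θ` is
`θ₀` or its partner. -/
theorem filter_add_partner_eq (hact : RDAction Ψ ρ ρ') (hΔ : Ψ.IsBase Δ)
    (hstab : ∀ γ : Γ, ∀ a ∈ Δ, ρ γ a ∈ Δ) {β θ₀ : X} (hβ : β ∈ Ψ.roots)
    (hno : ¬IsOrthogonalSet Ψ (orb ρ β)) (hθ₀ : θ₀ ∈ orb ρ β) :
    (orb ρ β).filter (fun θ => θ + partner Ψ ρ β θ = θ₀ + partner Ψ ρ β θ₀) =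
      {θ₀, partner Ψ ρ β θ₀} := by
  have hp₀ := (partner_spec hact hΔ hstab hβ hno hθ₀).1
  ext θ
  simp only [mem_filter, mem_insert, mem_singleton]
  constructor
  · rintro ⟨hθ, hsum⟩
    by_contra! hcon
    have hp := (partner_spec hact hΔ hstab hβ hno hθ).1
    have hpθ₀ : partner Ψ ρ β θ ≠ θ₀ := fun h =>
      hcon.2 (by rw [← h, partner_partner hact hΔ hstab hβ hno hθ])
    have hpair := congrArg (fun x => Ψ.pair x (Ψ.coroot θ₀)) hsum
    simp only [map_add, AddMonoidHom.add_apply] at hpair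
    rw [Ψ.pair_self θ₀ (hact.orb_subset_roots hβ hθ₀),
      pair_partner_coroot hact hΔ hstab hβ hno hθ₀] at hpair
    have q₁ := pair_coroot_mem_of_mem_orb hact hΔ hstab hβ hθ hθ₀ hcon.1
    have q₂ := pair_coroot_mem_of_mem_orb hact hΔ hstab hβ hp hθ₀ hpθ₀
    omega
  · rintro (rfl | rfl)
    · exact ⟨hθ₀, rfl⟩
    · exact ⟨hp₀, by rw [partner_partner hact hΔ hstab hβ hno hθ₀, add_comm]⟩

theorem sum_coroot_Xi (hact : RDAction Ψ ρ ρ') (hΔ : Ψ.IsBase Δ)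
    (hstab : ∀ γ : Γ, ∀ a ∈ Δ, ρ γ a ∈ Δ) {β : X} (hβ : β ∈ Ψ.roots) :
    ∑ ξ ∈ Xi Ψ ρ β, Ψ.coroot ξ = ∑ θ ∈ orb ρ β, Ψ.coroot θ := by
  by_cases hno : IsOrthogonalSet Ψ (orb ρ β)
  · rw [Xi, if_pos hno]
  have hmaps : ∀ θ ∈ orb ρ β, θ + partner Ψ ρ β θ ∈ (orb ρ β).image
      (fun θ => θ + partner Ψ ρ β θ) := fun θ hθ => mem_image_of_mem _ hθ
  rw [Xi, if_neg hno, ← sum_fiberwise_of_maps_to hmaps]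
  refine sum_congr rfl fun ξ hξ => ?_
  obtain ⟨θ₀, hθ₀, rfl⟩ := mem_image.1 hξ
  rw [filter_add_partner_eq hact hΔ hstab hβ hno hθ₀,
    sum_pair (partner_spec hact hΔ hstab hβ hno hθ₀).2.1.symm,
    coroot_add_partner hact hΔ hstab hβ hno hθ₀]

theorem card_orb_eq_two_mul_card_Xi (hact : RDAction Ψ ρ ρ') (hΔ : Ψ.IsBase Δ)
    (hstab : ∀ γ : Γ, ∀ a ∈ Δ, ρ γ a ∈ Δ) {β : X} (hβ : β ∈ Ψ.roots)
    (hno : ¬IsOrthogonalSet Ψ (orb ρ β)) : (orb ρ β).card = 2 * (Xi Ψ ρ β).card := by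
  have hmaps : ∀ θ ∈ orb ρ β, θ + partner Ψ ρ β θ ∈ (orb ρ β).image
      (fun θ => θ + partner Ψ ρ β θ) := fun θ hθ => mem_image_of_mem _ hθ
  rw [Xi, if_neg hno, card_eq_sum_card_fiberwise hmaps, mul_comm, ← smul_eq_mul, ← sum_const]
  refine sum_congr rfl fun ξ hξ => ?_
  obtain ⟨θ₀, hθ₀, rfl⟩ := mem_image.1 hξ
  rw [filter_add_partner_eq hact hΔ hstab hβ hno hθ₀,
    card_pair (partner_spec hact hΔ hstab hβ hno hθ₀).2.1.symm]

theorem pair_sum_coroot_orb_of_isOrthogonalSet {β : X} (hβ : β ∈ Ψ.roots)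
    (h : IsOrthogonalSet Ψ (orb ρ β)) : Ψ.pair β (∑ θ ∈ orb ρ β, Ψ.coroot θ) = 2 := by
  rw [map_sum, sum_eq_single_of_mem β (mem_orb_self β)
    fun θ hθ hne => h β (mem_orb_self β) θ hθ hne.symm, Ψ.pair_self β hβ]

theorem pair_sum_coroot_orb_of_not_isOrthogonalSet (hact : RDAction Ψ ρ ρ')
    (hΔ : Ψ.IsBase Δ) (hstab : ∀ γ : Γ, ∀ a ∈ Δ, ρ γ a ∈ Δ) {β : X} (hβ : β ∈ Ψ.roots)
    (hno : ¬IsOrthogonalSet Ψ (orb ρ β)) : Ψ.pair β (∑ θ ∈ orb ρ β, Ψ.coroot θ) = 1 := by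
  obtain ⟨hp, hpne, hpp⟩ := partner_spec hact hΔ hstab hβ hno (mem_orb_self β)
  have hrest : ∀ θ ∈ ((orb ρ β).erase β).erase (partner Ψ ρ β β),
      Ψ.pair β (Ψ.coroot θ) = 0 := by
    intro θ hθ
    obtain ⟨hθp, hθβ, hθ⟩ := by simpa only [mem_erase] using hθ
    by_contra h
    exact hθp (eq_partner hact hΔ hstab hβ hno (mem_orb_self β) hθ hθβ h)
  rw [map_sum, ← add_sum_erase _ _ (mem_orb_self β),
    ← add_sum_erase _ _ (mem_erase.2 ⟨hpne, hp⟩), sum_eq_zero hrest, Ψ.pair_self β hβ, hpp]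
  norm_num

theorem restCoroot_eq_smul_sum_coroot_orb (hact : RDAction Ψ ρ ρ') (hΔ : Ψ.IsBase Δ)
    (hstab : ∀ γ : Γ, ∀ a ∈ Δ, ρ γ a ∈ Δ) {β : X} (hβ : β ∈ Ψ.roots) :
    restCoroot Ψ ρ β =
      (((orb ρ β).card / (Xi Ψ ρ β).card : ℕ) : ℤ) • ∑ θ ∈ orb ρ β, Ψ.coroot θ := by
  rw [restCoroot, sum_coroot_Xi hact hΔ hstab hβ]

theorem pair_restCoroot (hact : RDAction Ψ ρ ρ') (hΔ : Ψ.IsBase Δ)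
    (hstab : ∀ γ : Γ, ∀ a ∈ Δ, ρ γ a ∈ Δ) {β : X} (hβ : β ∈ Ψ.roots) :
    Ψ.pair β (restCoroot Ψ ρ β) = 2 := by
  have hcard := card_pos.2 ⟨β, mem_orb_self (ρ := ρ) β⟩
  rw [restCoroot_eq_smul_sum_coroot_orb hact hΔ hstab hβ, map_zsmul, smul_eq_mul]
  by_cases hno : IsOrthogonalSet Ψ (orb ρ β)
  · rw [Xi, if_pos hno, Nat.div_self hcard, pair_sum_coroot_orb_of_isOrthogonalSet hβ hno]
    norm_num
  · have h := card_orb_eq_two_mul_card_Xi hact hΔ hstab hβ hno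
    rw [h, Nat.mul_div_cancel _ (by omega),
      pair_sum_coroot_orb_of_not_isOrthogonalSet hact hΔ hstab hβ hno]
    norm_num

end Orbit

theorem restCoroot_invariant_and_pairing_two_general
    [Fintype Γ]
    (Ψ : ZRootDatum X Y) (ρ : Γ →* AddAut X) (ρ' : Γ →* AddAut Y)
    (hact : RDAction Ψ ρ ρ') (Δ : Finset X) (hΔ : Ψ.IsBase Δ)
    (hstab : ∀ γ : Γ, ∀ a ∈ Δ, ρ γ a ∈ Δ)
    (β : X) (hβ : β ∈ Ψ.roots) :
    (∀ γ : Γ, ρ' γ (restCoroot Ψ ρ β) = restCoroot Ψ ρ β) ∧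
    (1 / (Fintype.card Γ : ℚ)) *
      (∑ γ : Γ, (Ψ.pair (ρ γ β) (restCoroot Ψ ρ β) : ℚ)) = 2 := by
  have hinv : ∀ γ : Γ, ρ' γ (restCoroot Ψ ρ β) = restCoroot Ψ ρ β := fun γ => by
    rw [restCoroot_eq_smul_sum_coroot_orb hact hΔ hstab hβ, map_zsmul,
      hact.map_sum_coroot_orb hβ]
  have hpair : ∀ γ : Γ, Ψ.pair (ρ γ β) (restCoroot Ψ ρ β) = 2 := fun γ => by
    rw [← hinv γ, hact.pair_eq, pair_restCoroot hact hΔ hstab hβ]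
  refine ⟨hinv, ?_⟩
  simp only [hpair, Int.cast_ofNat, sum_const, card_univ, nsmul_eq_mul]
  field_simp

/-- For `β ∈ Φ` and `α = i*(β)`, the restricted coroot
`α^∨ = (|Γ·β|/|Ξ_β|) ∑_{ξ∈Ξ_β} ξ^∨` lies in `X̄_* = (X_*)^Γ`, and
`⟨ι(α), i_*(α^∨)⟩ = 2`, where `ι` is the averaging section
`ι(i*β) = (1/|Γ|) ∑_{γ∈Γ} γ·β` and `i_*` the inclusion of `(X_*)^Γ` in `X_*`. -/
theorem restCoroot_invariant_and_pairing_two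
    [Fintype Γ] [Module.Free ℤ X] [Module.Finite ℤ X]
    (Ψ : ZRootDatum X Y) (ρ : Γ →* AddAut X) (ρ' : Γ →* AddAut Y)
    (hact : RDAction Ψ ρ ρ') (Δ : Finset X) (hΔ : Ψ.IsBase Δ)
    (hstab : ∀ γ : Γ, ∀ a ∈ Δ, ρ γ a ∈ Δ)
    (β : X) (hβ : β ∈ Ψ.roots) :
    (∀ γ : Γ, ρ' γ (restCoroot Ψ ρ β) = restCoroot Ψ ρ β) ∧
    (1 / (Fintype.card Γ : ℚ)) *
      (∑ γ : Γ, (Ψ.pair (ρ γ β) (restCoroot Ψ ρ β) : ℚ)) = 2 :=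
  restCoroot_invariant_and_pairing_two_general Ψ ρ ρ' hact Δ hΔ hstab β hβ
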